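/- Let G ≤ P_n be a stabilizer group (an abelian subgroup of the n-qubit Pauli group with −I ∉ G) and let A_1, …, A_p be pairwise disjoint subsets of [n] whose union is [n]. Then log₂|G| ≤ Σ_{i=1}^p c(ρ_{A_i}(G)), where for a subgroup M ≤ P̂_n, c(M) denotes the maximum of log₂|K| over all commuting subgroups K ≤ M. -/

import Mathlib

open Matrix

noncomputable section

/-- The space of `n`-qubit operators (2^n × 2^n complex matrices, indexed by bit strings). -/
abbrev QMat (n : ℕ) := Matrix (Fin n → Fin 2) (Fin n → Fin 2) ℂ

/-- The space of `n`-qubit state vectors (ℂ^{2^n}, indexed by bit strings). -/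
abbrev QVec (n : ℕ) := (Fin n → Fin 2) → ℂ

def PauliX : Matrix (Fin 2) (Fin 2) ℂ := !![0, 1; 1, 0]
def PauliY : Matrix (Fin 2) (Fin 2) ℂ := !![0, -Complex.I; Complex.I, 0]
def PauliZ : Matrix (Fin 2) (Fin 2) ℂ := !![1, 0; 0, -1]

/-- `Q` is one of the four single-qubit Pauli matrices `I, X, Y, Z`. -/
def IsSingleQubitPauli (Q : Matrix (Fin 2) (Fin 2) ℂ) : Prop :=
  Q = 1 ∨ Q = PauliX ∨ Q = PauliY ∨ Q = PauliZ

/-- Kronecker product, in qubit order, of `n` single-qubit operators. -/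
def tensorn (n : ℕ) (Q : Fin n → Matrix (Fin 2) (Fin 2) ℂ) : QMat n :=
  fun x y => ∏ j, Q j (x j) (y j)

/-- `P` is an element of the `n`-qubit Pauli group: `P = i^ℓ · Q_1 ⊗ ⋯ ⊗ Q_n`. -/
def IsPauli {n : ℕ} (P : QMat n) : Prop :=
  ∃ (ℓ : Fin 4) (Q : Fin n → Matrix (Fin 2) (Fin 2) ℂ),
    (∀ j, IsSingleQubitPauli (Q j)) ∧ P = (Complex.I ^ (ℓ : ℕ)) • tensorn n Q

lemma tensorn_one (n : ℕ) : tensorn n (fun _ => (1 : Matrix (Fin 2) (Fin 2) ℂ)) = 1 := by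
  ext x y
  by_cases h : x = y
  · subst h
    simp [tensorn, Matrix.one_apply]
  · have hj : ∃ j, x j ≠ y j := by
      by_contra hc
      push_neg at hc
      exact h (funext hc)
    obtain ⟨j, hj⟩ := hj
    rw [tensorn, Matrix.one_apply]
    rw [if_neg h]
    exact Finset.prod_eq_zero (Finset.mem_univ j) (by simp [Matrix.one_apply, hj])

lemma tensorn_mul {n : ℕ} (Q R : Fin n → Matrix (Fin 2) (Fin 2) ℂ) :
    tensorn n Q * tensorn n R = tensorn n (fun j => Q j * R j) := by
  ext x y
  simp only [tensorn, Matrix.mul_apply]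
  rw [Finset.prod_univ_sum (fun _ => (Finset.univ : Finset (Fin 2)))
    (fun j b => Q j (x j) b * R j b (y j))]
  rw [Fintype.piFinset_univ]
  exact Finset.sum_congr rfl fun z _ => (Finset.prod_mul_distrib).symm

lemma IsSingleQubitPauli.mul_self {Q : Matrix (Fin 2) (Fin 2) ℂ}
    (h : IsSingleQubitPauli Q) : Q * Q = 1 := by
  rcases h with h | h | h | h <;> subst h
  · simp
  · rw [PauliX, Matrix.mul_fin_two, Matrix.one_fin_two]; norm_num
  · rw [PauliY, Matrix.mul_fin_two, Matrix.one_fin_two]; norm_num [Complex.I_mul_I]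
  · rw [PauliZ, Matrix.mul_fin_two, Matrix.one_fin_two]; norm_num

/-- The invertible `n`-qubit operators. -/
abbrev MatU (n : ℕ) := (QMat n)ˣ

/-- The `n`-qubit Pauli group, as a subgroup of the invertible 2^n × 2^n matrices. -/
def PauliGrp (n : ℕ) : Subgroup (MatU n) :=
  Subgroup.closure {u : MatU n | IsPauli (u : QMat n)}

/-- The matrix `i·I` as a unit. -/
def phaseUnit (n : ℕ) : MatU n :=
  Units.map (algebraMap ℂ (QMat n)).toMonoidHom (Units.mk0 Complex.I Complex.I_ne_zero)

lemma phaseUnit_isPauli (n : ℕ) : IsPauli ((phaseUnit n : MatU n) : QMat n) := by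
  refine ⟨1, fun _ => 1, fun _ => Or.inl rfl, ?_⟩
  rw [tensorn_one]
  show algebraMap ℂ (QMat n) Complex.I = _
  rw [Algebra.algebraMap_eq_smul_one]
  norm_num

lemma phaseUnit_mem (n : ℕ) : phaseUnit n ∈ PauliGrp n :=
  Subgroup.subset_closure (phaseUnit_isPauli n)

def phaseElt (n : ℕ) : ↥(PauliGrp n) := ⟨phaseUnit n, phaseUnit_mem n⟩

/-- The subgroup `⟨iI⟩` of the Pauli group. -/
def phaseSub (n : ℕ) : Subgroup ↥(PauliGrp n) := Subgroup.zpowers (phaseElt n)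

lemma phaseUnit_comm {n : ℕ} (g : MatU n) : g * phaseUnit n = phaseUnit n * g := by
  refine Units.ext ?_
  show (g : QMat n) * (algebraMap ℂ (QMat n) Complex.I) =
    (algebraMap ℂ (QMat n) Complex.I) * (g : QMat n)
  exact (Algebra.commutes Complex.I (g : QMat n)).symm

instance phaseSub_normal (n : ℕ) : (phaseSub n).Normal := by
  constructor
  intro h hmem g
  obtain ⟨k, hk⟩ := Subgroup.mem_zpowers_iff.mp hmem
  have hc0 : Commute g (phaseElt n) := Subtype.ext (phaseUnit_comm (g : MatU n))
  have hc : Commute g h := hk ▸ hc0.zpow_right k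
  have hgh : g * h * g⁻¹ = h := by
    rw [hc.eq, mul_assoc, mul_inv_cancel, mul_one]
  rw [hgh]
  exact hmem

/-- The phase-less Pauli group `P̂_n = P_n / ⟨iI⟩`. -/
abbrev PhaselessPauli (n : ℕ) := ↥(PauliGrp n) ⧸ phaseSub n

/-- Two phase-less Pauli operators commute if (any, equivalently every, pair of)
representatives commute as matrices. -/
def PCommute {n : ℕ} (x y : PhaselessPauli n) : Prop :=
  ∃ P Q : ↥(PauliGrp n), QuotientGroup.mk P = x ∧ QuotientGroup.mk Q = y ∧
    ((P : MatU n) : QMat n) * ((Q : MatU n) : QMat n) =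
      ((Q : MatU n) : QMat n) * ((P : MatU n) : QMat n)

/-- A commuting subgroup of the phase-less Pauli group `P̂_n`: all pairs of elements
commute. -/
def IsCommutingSubgroup {n : ℕ} (M : Subgroup (PhaselessPauli n)) : Prop :=
  ∀ x ∈ M, ∀ y ∈ M, PCommute x y

/-- The tensor factors of a Pauli matrix (junk value otherwise); for a Pauli matrix the
decomposition `P = i^ℓ · Q_1 ⊗ ⋯ ⊗ Q_n` is unique. -/
def pauliFactor {n : ℕ} (P : QMat n) : Fin n → Matrix (Fin 2) (Fin 2) ℂ :=
  @dite _ (IsPauli P) (Classical.dec _) (fun h => h.choose_spec.choose) (fun _ => fun _ => 1)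

lemma pauliFactor_single {n : ℕ} (P : QMat n) (j : Fin n) :
    IsSingleQubitPauli (pauliFactor P j) := by
  rw [pauliFactor]
  split
  · next h => exact h.choose_spec.choose_spec.1 j
  · exact Or.inl rfl

/-- The matrix representing the local view `ρ_A(P)`: the tensor factors of `P` on `A`,
identity elsewhere (and no phase). -/
def maskMat {n : ℕ} (A : Finset (Fin n)) (P : QMat n) : QMat n :=
  tensorn n (fun j => if j ∈ A then pauliFactor P j else 1)

lemma maskMat_isPauli {n : ℕ} (A : Finset (Fin n)) (P : QMat n) : IsPauli (maskMat A P) := by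
  refine ⟨0, fun j => if j ∈ A then pauliFactor P j else 1, ?_, ?_⟩
  · intro j
    by_cases h : j ∈ A
    · simpa [h] using pauliFactor_single P j
    · simp [h, IsSingleQubitPauli]
  · simp [maskMat]

lemma maskMat_mul_self {n : ℕ} (A : Finset (Fin n)) (P : QMat n) :
    maskMat A P * maskMat A P = 1 := by
  rw [maskMat, tensorn_mul]
  have h1 : (fun j => (if j ∈ A then pauliFactor P j else 1) *
      (if j ∈ A then pauliFactor P j else 1)) = fun _ : Fin n => (1 : Matrix (Fin 2) (Fin 2) ℂ) := by
    funext j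
    by_cases h : j ∈ A
    · simp only [h, if_true]
      exact (pauliFactor_single P j).mul_self
    · simp [h]
  rw [h1, tensorn_one]

/-- The local view `ρ_A(P)` as a unit. -/
def maskUnit {n : ℕ} (A : Finset (Fin n)) (P : QMat n) : MatU n :=
  ⟨maskMat A P, maskMat A P, maskMat_mul_self A P, maskMat_mul_self A P⟩

lemma maskUnit_mem {n : ℕ} (A : Finset (Fin n)) (P : QMat n) : maskUnit A P ∈ PauliGrp n :=
  Subgroup.subset_closure (maskMat_isPauli A P)

/-- The local view `ρ_A(P) ∈ P̂_n` of a Pauli operator `P` at `A ⊆ [n]`. -/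
def localView {n : ℕ} (A : Finset (Fin n)) (P : QMat n) : PhaselessPauli n :=
  QuotientGroup.mk (⟨maskUnit A P, maskUnit_mem A P⟩ : ↥(PauliGrp n))

/-- `c(M)`: the largest dimension `log₂|K|` of a commuting subgroup `K ≤ M`. -/
def cdim {n : ℕ} (M : Subgroup (PhaselessPauli n)) : ℕ :=
  sSup ((fun K : Subgroup (PhaselessPauli n) => Nat.log 2 (Nat.card K)) ''
    {K | K ≤ M ∧ IsCommutingSubgroup K})

/-!
`P̂_n` is an `𝔽₂`-vector space on which "anticommute" is an alternating bilinear form, and a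
stabilizer group `G` (no phases, since `-I ∉ G`) embeds in it as an isotropic subspace `V` of
dimension `log₂ |G|`. For a partition `A₁, …, A_p` the local views satisfy `∑ᵢ ρ_{Aᵢ} = id` and
`ρ_{Aᵢ}(x)` commutes with `ρ_{Aⱼ}(y)` for `i ≠ j`, so `x ↦ (ρ_{Aᵢ} x)ᵢ` embeds `V`
isotropically into `⊕ᵢ Wᵢ`, `Wᵢ = ρ_{Aᵢ}(V)`. An isotropic subspace of a space `W` with
radical `R` has dimension at most `(dim W + dim R) / 2`, and maximal isotropic subspaces attain
this bound; hence `dim V ≤ ∑ᵢ (dim Wᵢ + dim Rᵢ) / 2 = ∑ᵢ dim Uᵢ` for commuting subgroups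
`Uᵢ ≤ ρ_{Aᵢ}(G)`.
-/

namespace LinearMap.BilinForm

open Module

section Isotropic

variable {K M : Type*} [Field K] [AddCommGroup M] [Module K M]

theorem two_mul_finrank_le_of_le_orthogonal [FiniteDimensional K M]
    {B : LinearMap.BilinForm K M} {V : Submodule K M} (hV : V ≤ B.orthogonal V) :
    2 * finrank K V ≤ finrank K M + finrank K (LinearMap.ker B) := by
  have key := B.finrank_add_finrank_orthogonal' V
  have h₁ := Submodule.finrank_mono hV
  have h₂ := Submodule.finrank_mono (inf_le_right : V ⊓ LinearMap.ker B ≤ _)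
  omega

theorem sup_span_singleton_le_orthogonal {B : LinearMap.BilinForm K M} (hB : B.IsAlt)
    {U : Submodule K M} (hU : U ≤ B.orthogonal U) {x : M} (hx : x ∈ B.orthogonal U) :
    U ⊔ K ∙ x ≤ B.orthogonal (U ⊔ K ∙ x) := by
  have hxU : ∀ u ∈ U, B u x = 0 := fun u hu => hx u hu
  have hUx : ∀ u ∈ U, B x u = 0 := fun u hu => hB.isRefl _ _ (hxU u hu)
  intro a ha b hb
  obtain ⟨u, hu, _, hr, rfl⟩ := Submodule.mem_sup.1 ha
  obtain ⟨u', hu', _, hr', rfl⟩ := Submodule.mem_sup.1 hb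
  obtain ⟨c, rfl⟩ := Submodule.mem_span_singleton.1 hr
  obtain ⟨c', rfl⟩ := Submodule.mem_span_singleton.1 hr'
  simp [hU hu u' hu', hxU u' hu', hUx u hu, hB x]

/-- A maximal isotropic subspace contains its orthogonal, hence the kernel of `B`. -/
theorem exists_le_orthogonal_two_mul_finrank_eq [FiniteDimensional K M]
    {B : LinearMap.BilinForm K M} (hB : B.IsAlt) :
    ∃ U : Submodule K M, U ≤ B.orthogonal U ∧
      2 * finrank K U = finrank K M + finrank K (LinearMap.ker B) := by
  obtain ⟨U, hU, hmax⟩ := set_has_maximal_iff_noetherian.2 inferInstance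
    {U : Submodule K M | U ≤ B.orthogonal U} ⟨⊥, by simp⟩
  have horth : B.orthogonal U ≤ U := by
    intro x hx
    by_contra hxU
    exact hmax _ (sup_span_singleton_le_orthogonal hB hU hx) <| SetLike.lt_iff_le_and_exists.2
      ⟨le_sup_left, x, Submodule.mem_sup_right (Submodule.mem_span_singleton_self x), hxU⟩
  have hker : LinearMap.ker B ≤ U := fun x hx =>
    horth fun u _ => hB.isRefl _ _ (by simp [LinearMap.mem_ker.1 hx])
  refine ⟨U, hU, ?_⟩
  have key := B.finrank_add_finrank_orthogonal' U
  rw [le_antisymm horth hU, inf_eq_right.2 hker] at key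
  omega

end Isotropic

section Pi

variable {K ι : Type*} [Field K] [Fintype ι] {M : ι → Type*} [∀ i, AddCommGroup (M i)]
  [∀ i, Module K (M i)]

def pi (B : ∀ i, LinearMap.BilinForm K (M i)) : LinearMap.BilinForm K (∀ i, M i) :=
  ∑ i, (B i).compl₁₂ (LinearMap.proj i) (LinearMap.proj i)

@[simp]
theorem pi_apply (B : ∀ i, LinearMap.BilinForm K (M i)) (x y : ∀ i, M i) :
    pi B x y = ∑ i, B i (x i) (y i) := by
  simp [pi]

theorem mem_ker_pi_iff {B : ∀ i, LinearMap.BilinForm K (M i)} {x : ∀ i, M i} :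
    x ∈ LinearMap.ker (pi B) ↔ ∀ i, x i ∈ LinearMap.ker (B i) := by
  classical
  simp only [LinearMap.mem_ker]
  refine ⟨fun hx i => LinearMap.ext fun z => ?_, fun hx => LinearMap.ext fun y => by simp [hx]⟩
  have := LinearMap.congr_fun hx (Pi.single i z)
  rwa [pi_apply, Fintype.sum_eq_single i fun j hj => by rw [Pi.single_eq_of_ne hj, map_zero],
    Pi.single_eq_same] at this

def kerPiEquiv (B : ∀ i, LinearMap.BilinForm K (M i)) :
    LinearMap.ker (pi B) ≃ₗ[K] ∀ i, LinearMap.ker (B i) where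
  toFun x i := ⟨x.1 i, mem_ker_pi_iff.1 x.2 i⟩
  invFun y := ⟨fun i => y i, mem_ker_pi_iff.2 fun i => (y i).2⟩
  map_add' _ _ := rfl
  map_smul' _ _ := rfl
  left_inv _ := rfl
  right_inv _ := rfl

theorem finrank_ker_pi [∀ i, FiniteDimensional K (M i)] (B : ∀ i, LinearMap.BilinForm K (M i)) :
    finrank K (LinearMap.ker (pi B)) = ∑ i, finrank K (LinearMap.ker (B i)) := by
  rw [(kerPiEquiv B).finrank_eq, Module.finrank_pi_fintype]

end Pi

section Decomposition

variable {K M ι : Type*} [Field K] [AddCommGroup M] [Module K M] [Fintype ι]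

theorem apply_eq_sum_of_decomposition (β : LinearMap.BilinForm K M) {ρ : ι → M →ₗ[K] M}
    (hρ : ∀ x, ∑ i, ρ i x = x) (hβρ : ∀ i j, i ≠ j → ∀ x y, β (ρ i x) (ρ j y) = 0) (x y : M) :
    β x y = ∑ i, β (ρ i x) (ρ i y) := by
  conv_lhs => rw [← hρ x, ← hρ y]
  simp only [map_sum, LinearMap.sum_apply]
  exact Finset.sum_congr rfl fun i _ =>
    Fintype.sum_eq_single i fun j hj => hβρ j i hj x y

/-- `x ↦ (ρ i x)ᵢ` embeds `V` isotropically into `∏ᵢ ρ i (V)` with the orthogonal sum of the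
restricted forms, whose kernel is the product of their kernels. -/
theorem exists_le_orthogonal_finrank_le_sum [FiniteDimensional K M]
    {β : LinearMap.BilinForm K M} (hβ : β.IsAlt) {ρ : ι → M →ₗ[K] M}
    (hρ : ∀ x, ∑ i, ρ i x = x) (hβρ : ∀ i j, i ≠ j → ∀ x y, β (ρ i x) (ρ j y) = 0)
    {V : Submodule K M} (hV : V ≤ β.orthogonal V) :
    ∃ U : ι → Submodule K M, (∀ i, U i ≤ β.orthogonal (U i) ∧ U i ≤ V.map (ρ i)) ∧
      finrank K V ≤ ∑ i, finrank K (U i) := by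
  set W := fun i => V.map (ρ i)
  set B := fun i => β.restrict (W i)
  let f : V →ₗ[K] ∀ i, W i :=
    LinearMap.pi fun i => (ρ i).restrict fun x hx => Submodule.mem_map_of_mem hx
  have hf : Function.Injective f := fun x y hxy => Subtype.ext <|
    calc (x : M) = ∑ i, ρ i x := (hρ x).symm
      _ = ∑ i, ρ i y := Finset.sum_congr rfl fun i _ =>
        congrArg Subtype.val (_root_.congr_fun hxy i)
      _ = y := hρ y
  have hrange : LinearMap.range f ≤ (pi B).orthogonal (LinearMap.range f) := by
    rintro _ ⟨y, rfl⟩ _ ⟨x, rfl⟩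
    rw [pi_apply, ← hV y.2 x x.2]
    exact (apply_eq_sum_of_decomposition β hρ hβρ x y).symm
  have hbound := two_mul_finrank_le_of_le_orthogonal hrange
  rw [LinearMap.finrank_range_of_inj hf, Module.finrank_pi_fintype, finrank_ker_pi] at hbound
  choose U' hU' hrank using fun i =>
    exists_le_orthogonal_two_mul_finrank_eq (B := B i) fun x => hβ x
  refine ⟨fun i => (U' i).map (W i).subtype, fun i => ⟨?_, Submodule.map_subtype_le _ _⟩, ?_⟩
  · rintro _ ⟨x, hx, rfl⟩ _ ⟨y, hy, rfl⟩
    exact hU' i hx y hy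
  · simp only [Submodule.finrank_map_subtype_eq]
    rw [← Finset.sum_add_distrib] at hbound
    simp only [← hrank, ← Finset.mul_sum] at hbound
    omega

end Decomposition

end LinearMap.BilinForm

section SignsAndSquares

theorem mul_comm_or_eq_neg_of_mul_self {R : Type*} [Ring R] {a b : R}
    (ha : a * a = 1 ∨ a * a = -1) (hb : b * b = 1 ∨ b * b = -1)
    (hab : a * b * (a * b) = 1 ∨ a * b * (a * b) = -1) : a * b = b * a ∨ a * b = -(b * a) := by
  have key : a * (a * b * (a * b)) * b = a * a * (b * a) * (b * b) := by noncomm_ring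
  rcases ha with ha | ha <;> rcases hb with hb | hb <;> rcases hab with hab | hab <;>
    simp only [ha, hb, hab, mul_one, one_mul, mul_neg, neg_mul, neg_neg] at key <;>
    first
    | exact .inl key
    | exact .inr key
    | exact .inl (neg_inj.1 key)
    | exact .inr (neg_eq_iff_eq_neg.1 key)

theorem mul_mul_comm_iff_of_mul_comm_or_eq_neg {M : Type*} [Monoid M] [HasDistribNeg M]
    (hM : ∀ x : M, x ≠ -x) {a b c : M} (ha : a * c = c * a ∨ a * c = -(c * a))
    (hb : b * c = c * b ∨ b * c = -(c * b)) :
    a * b * c = c * (a * b) ↔ (a * c = c * a ↔ b * c = c * b) := by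
  have key : a * b * c = a * (b * c) := mul_assoc a b c
  rcases ha with ha | ha <;> rcases hb with hb | hb <;>
    simp only [hb, mul_neg, ← mul_assoc, ha, neg_mul, neg_neg] at key <;>
    simp [key, ha, hb, mul_assoc, (hM _).symm]

theorem zpow_eq_one_of_zpow_mem {H : Type*} [Group H] [HasDistribNeg H] {S : Subgroup H}
    (hS : (-1 : H) ∉ S) {z : H} (hz : z ^ (2 : ℤ) = -1) {k : ℤ} (hk : z ^ k ∈ S) : z ^ k = 1 := by
  obtain ⟨m, rfl | rfl⟩ := Int.even_or_odd' k
  · rw [_root_.zpow_mul, hz] at hk ⊢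
    rcases Int.even_or_odd m with hm | hm
    · exact hm.neg_one_zpow
    · rw [hm.neg_one_zpow] at hk
      exact absurd hk hS
  · refine absurd ?_ hS
    have hsq : z ^ (2 * m + 1) * z ^ (2 * m + 1) = -1 := by
      rw [← _root_.zpow_add, show 2 * m + 1 + (2 * m + 1) = 2 * (2 * m + 1) by ring,
        _root_.zpow_mul, hz, Odd.neg_one_zpow ⟨m, rfl⟩]
    exact hsq ▸ S.mul_mem hk hk

theorem log_two_card_eq_finrank (V : Type*) [AddCommGroup V] [Module (ZMod 2) V] [Finite V] :
    Nat.log 2 (Nat.card V) = Module.finrank (ZMod 2) V := by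
  rw [Module.natCard_eq_pow_finrank (K := ZMod 2), Nat.card_zmod, Nat.log_pow one_lt_two]

end SignsAndSquares

namespace IsSingleQubitPauli

variable {Q R : Matrix (Fin 2) (Fin 2) ℂ}

theorem mul_eq_pow_smul (hQ : IsSingleQubitPauli Q) (hR : IsSingleQubitPauli R) :
    ∃ (k : ℕ) (S : Matrix (Fin 2) (Fin 2) ℂ), IsSingleQubitPauli S ∧ Q * R = Complex.I ^ k • S := by
  have hX : IsSingleQubitPauli PauliX := .inr (.inl rfl)
  have hY : IsSingleQubitPauli PauliY := .inr (.inr (.inl rfl))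
  have hZ : IsSingleQubitPauli PauliZ := .inr (.inr (.inr rfl))
  obtain ⟨xy, xz, yx, yz, zx, zy⟩ :
      PauliX * PauliY = Complex.I ^ 1 • PauliZ ∧ PauliX * PauliZ = Complex.I ^ 3 • PauliY ∧
      PauliY * PauliX = Complex.I ^ 3 • PauliZ ∧ PauliY * PauliZ = Complex.I ^ 1 • PauliX ∧
      PauliZ * PauliX = Complex.I ^ 1 • PauliY ∧ PauliZ * PauliY = Complex.I ^ 3 • PauliX := by
    refine ⟨?_, ?_, ?_, ?_, ?_, ?_⟩ <;> ext i j <;> fin_cases i <;> fin_cases j <;>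
      simp [PauliX, PauliY, PauliZ]
  rcases hQ with rfl | rfl | rfl | rfl
  · exact ⟨0, R, hR, by simp⟩
  all_goals rcases hR with rfl | rfl | rfl | rfl
  -- rows `X`, `Y`, `Z`; columns `I`, `X`, `Y`, `Z`
  exacts [⟨0, _, hX, by simp⟩, ⟨0, 1, .inl rfl, by simp [hX.mul_self]⟩, ⟨1, _, hZ, xy⟩,
    ⟨3, _, hY, xz⟩, ⟨0, _, hY, by simp⟩, ⟨3, _, hZ, yx⟩, ⟨0, 1, .inl rfl, by simp [hY.mul_self]⟩,
    ⟨1, _, hX, yz⟩, ⟨0, _, hZ, by simp⟩, ⟨1, _, hY, zx⟩, ⟨3, _, hX, zy⟩,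
    ⟨0, 1, .inl rfl, by simp [hZ.mul_self]⟩]

theorem trace_mul_eq_zero (hQ : IsSingleQubitPauli Q) (hR : IsSingleQubitPauli R) (h : Q ≠ R) :
    (Q * R).trace = 0 := by
  rcases hQ with rfl | rfl | rfl | rfl <;> rcases hR with rfl | rfl | rfl | rfl <;>
    first | exact absurd rfl h | simp [PauliX, PauliY, PauliZ, Matrix.trace_fin_two]

end IsSingleQubitPauli

section Tensor

variable {n : ℕ}

theorem tensorn_smul (c : Fin n → ℂ) (Q : Fin n → Matrix (Fin 2) (Fin 2) ℂ) :
    tensorn n (fun j => c j • Q j) = (∏ j, c j) • tensorn n Q := by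
  ext x y
  simp [tensorn, Finset.prod_mul_distrib]

theorem trace_tensorn (Q : Fin n → Matrix (Fin 2) (Fin 2) ℂ) :
    (tensorn n Q).trace = ∏ j, (Q j).trace := by
  simp only [Matrix.trace, Matrix.diag, tensorn]
  rw [Finset.prod_univ_sum, Fintype.piFinset_univ]

theorem tensorn_mul_self {Q : Fin n → Matrix (Fin 2) (Fin 2) ℂ}
    (hQ : ∀ j, IsSingleQubitPauli (Q j)) : tensorn n Q * tensorn n Q = 1 := by
  simp [tensorn_mul, fun j => (hQ j).mul_self, tensorn_one]

theorem pow_smul_tensorn_mul_pow_smul_tensorn {a b : ℕ} {Q R S : Fin n → Matrix (Fin 2) (Fin 2) ℂ}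
    {k : Fin n → ℕ} (hQR : ∀ j, Q j * R j = Complex.I ^ k j • S j) :
    Complex.I ^ a • tensorn n Q * Complex.I ^ b • tensorn n R =
      Complex.I ^ (a + b + ∑ j, k j) • tensorn n S := by
  rw [Matrix.smul_mul, Matrix.mul_smul, smul_smul, tensorn_mul, funext hQR, tensorn_smul,
    Finset.prod_pow_eq_pow_sum, smul_smul, ← pow_add, ← pow_add]

/-- Distinct Pauli strings are trace-orthogonal. -/
theorem eq_of_tensorn_eq_smul {Q R : Fin n → Matrix (Fin 2) (Fin 2) ℂ}
    (hQ : ∀ j, IsSingleQubitPauli (Q j)) (hR : ∀ j, IsSingleQubitPauli (R j)) {c : ℂ}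
    (h : tensorn n Q = c • tensorn n R) : Q = R := by
  by_contra hne
  obtain ⟨k, hk⟩ := Function.ne_iff.1 hne
  have hc : c ≠ 0 := by
    rintro rfl
    simpa [h] using tensorn_mul_self hQ
  have htr : (tensorn n Q * tensorn n R).trace = 0 := by
    rw [tensorn_mul, trace_tensorn]
    exact Finset.prod_eq_zero (Finset.mem_univ k) ((hQ k).trace_mul_eq_zero (hR k) hk)
  rw [h, Matrix.smul_mul, tensorn_mul_self hR, Matrix.trace_smul, Matrix.trace_one] at htr
  simp [hc] at htr

end Tensor

namespace IsPauli

variable {n : ℕ} {P P' : QMat n}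

theorem of_pow_smul (m : ℕ) {Q : Fin n → Matrix (Fin 2) (Fin 2) ℂ}
    (hQ : ∀ j, IsSingleQubitPauli (Q j)) : IsPauli (Complex.I ^ m • tensorn n Q) :=
  ⟨⟨m % 4, Nat.mod_lt _ (by norm_num)⟩, Q, hQ, by rw [Complex.I_pow_eq_pow_mod m]⟩

theorem exists_eq_pow_smul (hP : IsPauli P) :
    ∃ (m : ℕ) (Q : Fin n → Matrix (Fin 2) (Fin 2) ℂ),
      (∀ j, IsSingleQubitPauli (Q j)) ∧ P = Complex.I ^ m • tensorn n Q :=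
  let ⟨ℓ, Q, hQ, h⟩ := hP; ⟨ℓ, Q, hQ, h⟩

theorem mul (hP : IsPauli P) (hP' : IsPauli P') : IsPauli (P * P') := by
  obtain ⟨a, Q, hQ, rfl⟩ := hP.exists_eq_pow_smul
  obtain ⟨b, R, hR, rfl⟩ := hP'.exists_eq_pow_smul
  choose k S hS hQR using fun j => (hQ j).mul_eq_pow_smul (hR j)
  rw [pow_smul_tensorn_mul_pow_smul_tensorn hQR]
  exact of_pow_smul _ hS

theorem mul_self_eq_one_or_neg_one (hP : IsPauli P) : P * P = 1 ∨ P * P = -1 := by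
  obtain ⟨a, Q, hQ, rfl⟩ := hP.exists_eq_pow_smul
  rw [Matrix.smul_mul, Matrix.mul_smul, tensorn_mul_self hQ, smul_smul, ← pow_add, ← two_mul,
    pow_mul, Complex.I_sq]
  rcases neg_one_pow_eq_or ℂ a with h | h <;> simp [h]

end IsPauli

section PauliGroup

variable {n : ℕ}

theorem IsPauli.mul_comm_or_eq_neg {P P' : QMat n} (hP : IsPauli P) (hP' : IsPauli P') :
    P * P' = P' * P ∨ P * P' = -(P' * P) :=
  mul_comm_or_eq_neg_of_mul_self hP.mul_self_eq_one_or_neg_one hP'.mul_self_eq_one_or_neg_one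
    (hP.mul hP').mul_self_eq_one_or_neg_one

theorem isPauli_of_mem_pauliGrp {u : MatU n} (hu : u ∈ PauliGrp n) : IsPauli (u : QMat n) := by
  induction hu using Subgroup.closure_induction with
  | mem x hx => exact hx
  | one => exact ⟨0, _, fun _ => .inl rfl, by simp [tensorn_one]⟩
  | mul x y _ _ hx hy => exact hx.mul hy
  | inv x _ hx =>
    -- `x⁴ = 1`, so `x⁻¹ = x³`
    have hinv : x⁻¹ = x * x * x := by
      refine (eq_inv_of_mul_eq_one_left (Units.ext ?_)).symm
      rcases hx.mul_self_eq_one_or_neg_one with h | h <;> simp [mul_assoc, h]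
    rw [hinv, Units.val_mul, Units.val_mul]
    exact (hx.mul hx).mul hx

theorem IsPauli.eq_pow_smul_pauliFactor {P : QMat n} (hP : IsPauli P) :
    ∃ m : ℕ, P = Complex.I ^ m • tensorn n (pauliFactor P) := by
  rw [pauliFactor, dif_pos hP]
  exact ⟨_, hP.choose_spec.choose_spec.2⟩

theorem pauliFactor_pow_smul_tensorn (m : ℕ) {Q : Fin n → Matrix (Fin 2) (Fin 2) ℂ}
    (hQ : ∀ j, IsSingleQubitPauli (Q j)) : pauliFactor (Complex.I ^ m • tensorn n Q) = Q := by
  obtain ⟨a, ha⟩ := (IsPauli.of_pow_smul m hQ).eq_pow_smul_pauliFactor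
  refine eq_of_tensorn_eq_smul (pauliFactor_single _) hQ (c := (Complex.I ^ a)⁻¹ * Complex.I ^ m) ?_
  conv_rhs => rw [mul_smul, ha, smul_smul, inv_mul_cancel₀ (pow_ne_zero _ Complex.I_ne_zero),
    one_smul]

end PauliGroup

instance (n : ℕ) : CharZero (QMat n) :=
  charZero_of_injective_algebraMap (algebraMap ℂ _).injective

section Phaseless

variable {n : ℕ}

theorem phaseUnit_val : ((phaseUnit n : MatU n) : QMat n) = Complex.I • 1 :=
  Algebra.algebraMap_eq_smul_one _

theorem phaseElt_pow_val (k : ℕ) :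
    (((phaseElt n ^ k : PauliGrp n) : MatU n) : QMat n) = Complex.I ^ k • 1 := by
  simp [phaseElt, phaseUnit_val, smul_pow]

theorem mk_eq_mk_of_val_eq_pow_smul {u v : PauliGrp n} (k : ℕ)
    (h : ((u : MatU n) : QMat n) = Complex.I ^ k • ((v : MatU n) : QMat n)) :
    (u : PhaselessPauli n) = v := by
  have huv : u = phaseElt n ^ k * v :=
    Subtype.ext <| Units.ext <| by rw [Subgroup.coe_mul, Units.val_mul, phaseElt_pow_val, h,
      Matrix.smul_mul, one_mul]
  rw [huv, QuotientGroup.mk_mul, mul_eq_right]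
  exact (QuotientGroup.eq_one_iff _).2 (Subgroup.pow_mem _ (Subgroup.mem_zpowers _) k)

theorem commute_of_mem_phaseSub {z : PauliGrp n} (hz : z ∈ phaseSub n) (g : MatU n) :
    Commute (z : MatU n) g := by
  obtain ⟨k, rfl⟩ := Subgroup.mem_zpowers_iff.1 hz
  exact (Commute.zpow_left (phaseUnit_comm g).symm k)

theorem pcommute_mk_iff {u v : PauliGrp n} :
    PCommute (u : PhaselessPauli n) v ↔ (u : MatU n) * v = v * u := by
  refine ⟨fun ⟨u', v', hu, hv, h⟩ => ?_, fun h => ⟨u, v, rfl, rfl, congrArg Units.val h⟩⟩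
  have hz := commute_of_mem_phaseSub (QuotientGroup.eq.1 hu)
  have hw := commute_of_mem_phaseSub (QuotientGroup.eq.1 hv)
  have h' : (u' : MatU n) * v' = v' * u' := Units.ext (by simp only [Units.val_mul]; exact h)
  set z : MatU n := ((u'⁻¹ * u : PauliGrp n) : MatU n)
  set w : MatU n := ((v'⁻¹ * v : PauliGrp n) : MatU n)
  have eu : (u : MatU n) = u' * z := by simp [z]
  have ev : (v : MatU n) = v' * w := by simp [w]
  calc (u : MatU n) * v = u' * z * (v' * w) := by rw [eu, ev]
    _ = u' * v' * (z * w) := (hz _).mul_mul_mul_comm _ _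
    _ = v' * u' * (w * z) := by rw [h', (hz w).eq]
    _ = v' * w * (u' * z) := ((hw _).mul_mul_mul_comm _ _).symm
    _ = v * u := by rw [eu, ev]

theorem mul_comm_or_eq_neg_of_pauliGrp (u v : PauliGrp n) :
    (u : MatU n) * v = v * u ∨ (u : MatU n) * v = -(v * u) := by
  simpa [Units.ext_iff] using
    (isPauli_of_mem_pauliGrp u.2).mul_comm_or_eq_neg (isPauli_of_mem_pauliGrp v.2)

theorem pcommute_mul_left_iff (x y z : PhaselessPauli n) :
    PCommute (x * y) z ↔ (PCommute x z ↔ PCommute y z) := by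
  induction x using QuotientGroup.induction_on with | H u =>
  induction y using QuotientGroup.induction_on with | H v =>
  induction z using QuotientGroup.induction_on with | H w =>
  rw [← QuotientGroup.mk_mul, pcommute_mk_iff, pcommute_mk_iff, pcommute_mk_iff, Subgroup.coe_mul]
  exact mul_mul_comm_iff_of_mul_comm_or_eq_neg units_ne_neg_self
    (mul_comm_or_eq_neg_of_pauliGrp u w) (mul_comm_or_eq_neg_of_pauliGrp v w)

theorem PCommute.symm {x y : PhaselessPauli n} (h : PCommute x y) : PCommute y x :=
  let ⟨P, Q, hP, hQ, hPQ⟩ := h; ⟨Q, P, hQ, hP, hPQ.symm⟩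

theorem pcommute_comm (x y : PhaselessPauli n) : PCommute x y ↔ PCommute y x :=
  ⟨PCommute.symm, PCommute.symm⟩

theorem pcommute_self (x : PhaselessPauli n) : PCommute x x :=
  ⟨x.out, x.out, QuotientGroup.out_eq' x, QuotientGroup.out_eq' x, rfl⟩

theorem mk_eq_mk_of_eq_or_eq_neg {u v : PauliGrp n}
    (h : (u : MatU n) = v ∨ (u : MatU n) = -v) : (u : PhaselessPauli n) = v := by
  rcases h with h | h
  · rw [Subtype.ext h]
  · refine mk_eq_mk_of_val_eq_pow_smul 2 ?_
    simp [h]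

instance : CommGroup (PhaselessPauli n) where
  mul_comm x y := by
    induction x using QuotientGroup.induction_on with | H u =>
    induction y using QuotientGroup.induction_on with | H v =>
    exact mk_eq_mk_of_eq_or_eq_neg (mul_comm_or_eq_neg_of_pauliGrp u v)

theorem PhaselessPauli.mul_self (x : PhaselessPauli n) : x * x = 1 := by
  induction x using QuotientGroup.induction_on with | H u =>
  refine (mk_eq_mk_of_eq_or_eq_neg (v := 1) ?_).trans (QuotientGroup.mk_one _)
  simpa [Units.ext_iff] using (isPauli_of_mem_pauliGrp u.2).mul_self_eq_one_or_neg_one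

end Phaseless

section VectorSpace

variable {n : ℕ}

theorem finite_setOf_isPauli : {P : QMat n | IsPauli P}.Finite := by
  have hS : {Q : Matrix (Fin 2) (Fin 2) ℂ | IsSingleQubitPauli Q}.Finite :=
    (Set.toFinite {1, PauliX, PauliY, PauliZ}).subset fun Q hQ => by
      simpa [IsSingleQubitPauli] using hQ
  have := hS.to_subtype
  refine (Set.finite_range fun x : Fin 4 × (Fin n → {Q | IsSingleQubitPauli Q}) =>
    Complex.I ^ (x.1 : ℕ) • tensorn n fun j => (x.2 j : Matrix (Fin 2) (Fin 2) ℂ)).subset ?_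
  rintro _ ⟨ℓ, Q, hQ, rfl⟩
  exact ⟨(ℓ, fun j => ⟨Q j, hQ j⟩), rfl⟩

instance : Finite (PauliGrp n) :=
  have := (finite_setOf_isPauli (n := n)).to_subtype
  Finite.of_injective (fun u => (⟨u.1, isPauli_of_mem_pauliGrp u.2⟩ : {P : QMat n | IsPauli P}))
    fun _ _ h => Subtype.ext <| Units.ext <| congrArg Subtype.val h

instance : Finite (PhaselessPauli n) := Quotient.finite _

instance : Module (ZMod 2) (Additive (PhaselessPauli n)) :=
  AddCommGroup.zmodModule fun x => by
    rw [two_nsmul]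
    exact PhaselessPauli.mul_self x.toMul

open scoped Classical in
def commBit (x y : PhaselessPauli n) : ZMod 2 := if PCommute x y then 0 else 1

theorem commBit_mul_left (x y z : PhaselessPauli n) :
    commBit (x * y) z = commBit x z + commBit y z := by
  by_cases hx : PCommute x z <;> by_cases hy : PCommute y z <;>
    simp [commBit, pcommute_mul_left_iff, hx, hy, show (1 : ZMod 2) + 1 = 0 from rfl]

theorem commBit_comm (x y : PhaselessPauli n) : commBit x y = commBit y x := by
  by_cases h : PCommute x y
  · simp [commBit, h, h.symm]
  · simp [commBit, h, (pcommute_comm x y).not.1 h]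

def commForm (n : ℕ) : LinearMap.BilinForm (ZMod 2) (Additive (PhaselessPauli n)) :=
  AddMonoidHom.toZModLinearMap 2 <| AddMonoidHom.mk'
    (fun x => AddMonoidHom.toZModLinearMap 2 <| AddMonoidHom.mk' (fun y => commBit x.toMul y.toMul)
      fun y z => by simp only [toMul_add, commBit_comm x.toMul, commBit_mul_left])
    fun x y => LinearMap.ext fun z => commBit_mul_left _ _ _

theorem commForm_apply (x y : Additive (PhaselessPauli n)) :
    commForm n x y = commBit x.toMul y.toMul := rfl

theorem commForm_isAlt : (commForm n).IsAlt := fun x => by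
  simp [commForm_apply, commBit, pcommute_self]

theorem commForm_eq_zero_iff {x y : Additive (PhaselessPauli n)} :
    commForm n x y = 0 ↔ PCommute x.toMul y.toMul := by
  by_cases h : PCommute x.toMul y.toMul <;> simp [commForm_apply, commBit, h]

end VectorSpace

section LocalView

variable {n : ℕ}

theorem maskMat_union {A B : Finset (Fin n)} (h : Disjoint A B) (P : QMat n) :
    maskMat (A ∪ B) P = maskMat A P * maskMat B P := by
  rw [maskMat, maskMat, maskMat, tensorn_mul]
  congr 1 with j
  by_cases hA : j ∈ A
  · simp [hA, Finset.disjoint_left.1 h hA]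
  · simp [hA]

theorem maskMat_commute {A B : Finset (Fin n)} (h : Disjoint A B) (P P' : QMat n) :
    maskMat A P * maskMat B P' = maskMat B P' * maskMat A P := by
  rw [maskMat, maskMat, tensorn_mul, tensorn_mul]
  congr 1 with j
  by_cases hA : j ∈ A
  · simp [hA, Finset.disjoint_left.1 h hA]
  · simp [hA]

theorem localView_eq_one {A : Finset (Fin n)} {P : QMat n} (h : maskMat A P = 1) :
    localView A P = 1 := by
  have hunit : maskUnit A P = 1 := Units.ext h
  unfold localView
  rw [← QuotientGroup.mk_one]
  congr 1
  exact Subtype.ext hunit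

theorem localView_empty (P : QMat n) : localView ∅ P = 1 :=
  localView_eq_one (by simp [maskMat, tensorn_one])

theorem localView_union {A B : Finset (Fin n)} (h : Disjoint A B) (P : QMat n) :
    localView (A ∪ B) P = localView A P * localView B P :=
  congrArg _ (Subtype.ext (Units.ext (maskMat_union h P)))

theorem prod_localView {ι : Type*} (s : Finset ι) {A : ι → Finset (Fin n)}
    (hA : (s : Set ι).PairwiseDisjoint A) (P : QMat n) :
    ∏ i ∈ s, localView (A i) P = localView (s.biUnion A) P := by
  classical
  induction s using Finset.induction_on with
  | empty => simp [localView_empty]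
  | insert i s hi ih =>
    rw [Finset.prod_insert hi, ih (hA.subset (by simp)), Finset.biUnion_insert,
      localView_union ((Finset.disjoint_biUnion_right _ _ _).2 fun j hj =>
        hA (by simp) (by simp [hj]) (ne_of_mem_of_not_mem hj hi).symm)]

theorem localView_univ (u : PauliGrp n) :
    localView Finset.univ ((u : MatU n) : QMat n) = (u : PhaselessPauli n) := by
  obtain ⟨m, hm⟩ := (isPauli_of_mem_pauliGrp u.2).eq_pow_smul_pauliFactor
  exact (mk_eq_mk_of_val_eq_pow_smul m (by simpa [maskUnit, maskMat] using hm)).symm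

theorem localView_mul {P P' : QMat n} (hP : IsPauli P) (hP' : IsPauli P') (A : Finset (Fin n)) :
    localView A (P * P') = localView A P * localView A P' := by
  obtain ⟨a, Q, hQ, rfl⟩ := hP.exists_eq_pow_smul
  obtain ⟨b, R, hR, rfl⟩ := hP'.exists_eq_pow_smul
  choose k S hS hQR using fun j => (hQ j).mul_eq_pow_smul (hR j)
  have hmask : maskMat A (Complex.I ^ a • tensorn n Q) * maskMat A (Complex.I ^ b • tensorn n R) =
      Complex.I ^ (∑ j, if j ∈ A then k j else 0) • maskMat A (Complex.I ^ a • tensorn n Q *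
        Complex.I ^ b • tensorn n R) := by
    simp only [maskMat, pow_smul_tensorn_mul_pow_smul_tensorn hQR, pauliFactor_pow_smul_tensorn _ hQ,
      pauliFactor_pow_smul_tensorn _ hR, pauliFactor_pow_smul_tensorn _ hS, tensorn_mul,
      ← Finset.prod_pow_eq_pow_sum, ← tensorn_smul]
    congr 1 with j
    by_cases hj : j ∈ A <;> simp [hj, hQR]
  exact (mk_eq_mk_of_val_eq_pow_smul _ hmask).symm

end LocalView

section LocalViewHom

variable {n : ℕ}

theorem localView_phaseUnit (A : Finset (Fin n)) :
    localView A ((phaseUnit n : MatU n) : QMat n) = 1 := by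
  have hphase : ((phaseUnit n : MatU n) : QMat n) = Complex.I ^ 1 • tensorn n fun _ => 1 := by
    rw [phaseUnit_val, tensorn_one, pow_one]
  refine localView_eq_one ?_
  rw [maskMat, hphase, pauliFactor_pow_smul_tensorn 1 fun _ => .inl rfl]
  simp [tensorn_one]

/-- `ρ_A` factors through `P̂_n` since it ignores phases. -/
def localViewHom (A : Finset (Fin n)) : PhaselessPauli n →* PhaselessPauli n :=
  QuotientGroup.lift (phaseSub n)
    (MonoidHom.mk' (fun u => localView A ((u : MatU n) : QMat n)) fun u v =>
      localView_mul (isPauli_of_mem_pauliGrp u.2) (isPauli_of_mem_pauliGrp v.2) A)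
    (Subgroup.zpowers_le.2 (localView_phaseUnit A))

theorem localViewHom_mk (A : Finset (Fin n)) (u : PauliGrp n) :
    localViewHom A u = localView A ((u : MatU n) : QMat n) := rfl

def localViewLin (A : Finset (Fin n)) :
    Additive (PhaselessPauli n) →ₗ[ZMod 2] Additive (PhaselessPauli n) :=
  AddMonoidHom.toZModLinearMap 2 (localViewHom A).toAdditive

theorem localViewLin_apply (A : Finset (Fin n)) (x : Additive (PhaselessPauli n)) :
    localViewLin A x = Additive.ofMul (localViewHom A x.toMul) := rfl

theorem prod_localViewHom {p : ℕ} {A : Fin p → Finset (Fin n)}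
    (hdisj : ∀ i j, i ≠ j → Disjoint (A i) (A j)) (hcover : ∀ x : Fin n, ∃ i, x ∈ A i)
    (x : PhaselessPauli n) : ∏ i, localViewHom (A i) x = x := by
  induction x using QuotientGroup.induction_on with | H u =>
  have huniv : Finset.univ.biUnion A = Finset.univ :=
    Finset.eq_univ_of_forall fun j => Finset.mem_biUnion.2 (by simpa using hcover j)
  simp only [localViewHom_mk]
  rw [prod_localView _ (fun i _ j _ hij => hdisj i j hij), huniv, localView_univ]

theorem sum_localViewLin {p : ℕ} {A : Fin p → Finset (Fin n)}
    (hdisj : ∀ i j, i ≠ j → Disjoint (A i) (A j)) (hcover : ∀ x : Fin n, ∃ i, x ∈ A i)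
    (x : Additive (PhaselessPauli n)) : ∑ i, localViewLin (A i) x = x := by
  simp only [localViewLin_apply, ← ofMul_prod, prod_localViewHom hdisj hcover, ofMul_toMul]

theorem commForm_localViewLin_of_disjoint {A B : Finset (Fin n)} (h : Disjoint A B)
    (x y : Additive (PhaselessPauli n)) : commForm n (localViewLin A x) (localViewLin B y) = 0 := by
  obtain ⟨u, hu⟩ := QuotientGroup.mk_surjective x.toMul
  obtain ⟨v, hv⟩ := QuotientGroup.mk_surjective y.toMul
  rw [commForm_eq_zero_iff, localViewLin_apply, localViewLin_apply, toMul_ofMul, toMul_ofMul, ← hu,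
    ← hv, localViewHom_mk, localViewHom_mk]
  exact ⟨_, _, rfl, rfl, maskMat_commute h _ _⟩

end LocalViewHom

section Stabilizer

variable {n : ℕ}

theorem phaseUnit_zpow_two : phaseUnit n ^ (2 : ℤ) = -1 :=
  Units.ext <| by simp [sq, phaseUnit_val, smul_smul]

def toPhaseless {G : Subgroup (MatU n)} (hG : G ≤ PauliGrp n) : G →* PhaselessPauli n :=
  (QuotientGroup.mk' (phaseSub n)).comp (Subgroup.inclusion hG)

theorem toPhaseless_injective {G : Subgroup (MatU n)} (hG : G ≤ PauliGrp n)
    (hneg : (-1 : MatU n) ∉ G) : Function.Injective (toPhaseless hG) := by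
  refine (injective_iff_map_eq_one _).2 fun g hg => ?_
  obtain ⟨k, hk⟩ := Subgroup.mem_zpowers_iff.1 ((QuotientGroup.eq_one_iff (N := phaseSub n) _).1 hg)
  have hk' : phaseUnit n ^ k = (g : MatU n) := congrArg Subtype.val hk
  exact Subtype.ext (hk' ▸ zpow_eq_one_of_zpow_mem hneg phaseUnit_zpow_two (hk' ▸ g.2))

def phaselessSubspace {G : Subgroup (MatU n)} (hG : G ≤ PauliGrp n) :
    Submodule (ZMod 2) (Additive (PhaselessPauli n)) :=
  AddSubgroup.toZModSubmodule 2 (toPhaseless hG).range.toAddSubgroup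

theorem log_two_card_eq_finrank_phaselessSubspace {G : Subgroup (MatU n)} (hG : G ≤ PauliGrp n)
    (hneg : (-1 : MatU n) ∉ G) :
    Nat.log 2 (Nat.card G) = Module.finrank (ZMod 2) (phaselessSubspace hG) := by
  rw [← log_two_card_eq_finrank, Nat.card_congr (MonoidHom.ofInjective
    (toPhaseless_injective hG hneg)).toEquiv]
  exact congrArg _ (Nat.card_congr (Equiv.subtypeEquiv Additive.ofMul fun _ => Iff.rfl))

theorem phaselessSubspace_le_orthogonal {G : Subgroup (MatU n)} (hG : G ≤ PauliGrp n)
    (hab : ∀ a ∈ G, ∀ b ∈ G, a * b = b * a) :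
    phaselessSubspace hG ≤ (commForm n).orthogonal (phaselessSubspace hG) := by
  rintro _ ⟨g, rfl⟩ _ ⟨h, rfl⟩
  exact commForm_eq_zero_iff.2 ⟨_, _, rfl, rfl, congrArg Units.val (hab _ h.2 _ g.2)⟩

theorem toMul_mem_closure_of_mem_map {G : Subgroup (MatU n)} (hG : G ≤ PauliGrp n)
    {A : Finset (Fin n)} {x : Additive (PhaselessPauli n)}
    (hx : x ∈ (phaselessSubspace hG).map (localViewLin A)) :
    x.toMul ∈ Subgroup.closure ((fun u : MatU n => localView A (u : QMat n)) '' G) := by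
  obtain ⟨_, ⟨g, rfl⟩, rfl⟩ := hx
  exact Subgroup.subset_closure ⟨g, g.2, rfl⟩

end Stabilizer

section CommutingDimension

variable {n : ℕ}

theorem le_cdim {M K : Subgroup (PhaselessPauli n)} (hKM : K ≤ M) (hK : IsCommutingSubgroup K) :
    Nat.log 2 (Nat.card K) ≤ cdim M :=
  le_csSup ⟨Nat.log 2 (Nat.card (PhaselessPauli n)), by
    rintro _ ⟨K', -, rfl⟩
    exact Nat.log_mono_right K'.card_le_card_group⟩ ⟨K, ⟨hKM, hK⟩, rfl⟩

theorem finrank_le_cdim {M : Subgroup (PhaselessPauli n)}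
    {U : Submodule (ZMod 2) (Additive (PhaselessPauli n))} (hU : U ≤ (commForm n).orthogonal U)
    (hUM : ∀ x ∈ U, x.toMul ∈ M) : Module.finrank (ZMod 2) U ≤ cdim M := by
  let K : Subgroup (PhaselessPauli n) := AddSubgroup.toSubgroup' U.toAddSubgroup
  have hcard : Nat.card K = Nat.card U :=
    Nat.card_congr (Equiv.subtypeEquiv Additive.ofMul fun _ => Iff.rfl)
  rw [← log_two_card_eq_finrank, ← hcard]
  exact le_cdim (fun x hx => hUM _ hx) fun x hx y hy => commForm_eq_zero_iff.1 (hU hy _ hx)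

end CommutingDimension

/-- for a stabilizer group `G ≤ P_n` (abelian, `-I ∉ G`) and a disjoint
covering `A_1, …, A_p` of `[n]`, `log₂|G| ≤ Σ_i c(ρ_{A_i}(G))`. -/
theorem stabilizer_dim_le_sum_cdim (n p : ℕ) (G : Subgroup (MatU n))
    (hG : ∀ g ∈ G, IsPauli ((g : MatU n) : QMat n))
    (hab : ∀ a ∈ G, ∀ b ∈ G, a * b = b * a)
    (hneg : (-1 : MatU n) ∉ G)
    (A : Fin p → Finset (Fin n))
    (hdisj : ∀ i j, i ≠ j → Disjoint (A i) (A j))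
    (hcover : ∀ x : Fin n, ∃ i, x ∈ A i) :
    Nat.log 2 (Nat.card G) ≤
      ∑ i, cdim (Subgroup.closure
        ((fun u : MatU n => localView (A i) (u : QMat n)) '' (G : Set (MatU n)))) := by
  have hGP : G ≤ PauliGrp n := fun g hg => Subgroup.subset_closure (hG g hg)
  obtain ⟨U, hU, hrank⟩ := LinearMap.BilinForm.exists_le_orthogonal_finrank_le_sum commForm_isAlt
    (sum_localViewLin hdisj hcover)
    (fun i j hij => commForm_localViewLin_of_disjoint (hdisj i j hij))
    (phaselessSubspace_le_orthogonal hGP hab)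
  calc Nat.log 2 (Nat.card G) = Module.finrank (ZMod 2) (phaselessSubspace hGP) :=
        log_two_card_eq_finrank_phaselessSubspace hGP hneg
    _ ≤ ∑ i, Module.finrank (ZMod 2) (U i) := hrank
    _ ≤ _ := Finset.sum_le_sum fun i _ =>
        finrank_le_cdim (hU i).1 fun _ hx => toMul_mem_closure_of_mem_map hGP ((hU i).2 hx)
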